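/- Fix d ≥ 1 and real parameters α_i, a_i (for 1 ≤ i ≤ d) and γ_{ik}, δ_{ik}, c_{ik}, e_{ik} (for 1 ≤ i < k ≤ d). For λ : {1,…,d} → ℝ define Y(λ) = Σ_i α_i a_i + 2 Σ_{i<k} [ cos(λ_k − λ_i)(γ_{ik} c_{ik} − δ_{ik} e_{ik}) − sin(λ_k − λ_i)(γ_{ik} e_{ik} + δ_{ik} c_{ik}) ], viewed as a function of all the parameters. Then for any two phase vectors λ, λ′, the tangent kernel — the sum over all parameters θ ∈ {α_i, a_i, γ_{ik}, δ_{ik}, c_{ik}, e_{ik}} of (∂Y/∂θ)(λ) · (∂Y/∂θ)(λ′) — equals Σ_i (a_i² + α_i²) + 4 Σ_{i<k} (γ_{ik}² + δ_{ik}² + c_{ik}² + e_{ik}²) · cos( (λ_k − λ_i) − (λ′_k − λ′_i) ). -/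
import Mathlib


open Finset

/-- The reparametrized quantum neural network objective
`Y(λ) = Σ_i α_i a_i + 2 Σ_{i<k} [cos(λ_k−λ_i)(γ_{ik}c_{ik} − δ_{ik}e_{ik})
  − sin(λ_k−λ_i)(γ_{ik}e_{ik} + δ_{ik}c_{ik})]`. -/
noncomputable def qnnY (d : ℕ) (α a : Fin d → ℝ) (γ δ c e : Fin d → Fin d → ℝ)
    (lam : Fin d → ℝ) : ℝ :=
  (∑ i : Fin d, α i * a i)
    + 2 * ∑ p ∈ Finset.univ.filter (fun p : Fin d × Fin d => p.1 < p.2),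
        (Real.cos (lam p.2 - lam p.1)
            * (γ p.1 p.2 * c p.1 p.2 - δ p.1 p.2 * e p.1 p.2)
          - Real.sin (lam p.2 - lam p.1)
            * (γ p.1 p.2 * e p.1 p.2 + δ p.1 p.2 * c p.1 p.2))

/-- Update of a doubly-indexed family of parameters at a single entry `(i,k)`. -/
noncomputable def updEntry (d : ℕ) (g : Fin d → Fin d → ℝ) (i k : Fin d) (t : ℝ) :
    Fin d → Fin d → ℝ :=
  Function.update g i (Function.update (g i) k t)

lemma updEntry_self (d : ℕ) (g : Fin d → Fin d → ℝ) (i k : Fin d) (t : ℝ) :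
    updEntry d g i k t i k = t := by
  simp [updEntry]

lemma updEntry_ne (d : ℕ) (g : Fin d → Fin d → ℝ) (i k : Fin d) (t : ℝ)
    (p : Fin d × Fin d) (hp : p ≠ (i, k)) :
    updEntry d g i k t p.1 p.2 = g p.1 p.2 := by
  unfold updEntry
  rcases eq_or_ne p.1 i with h1 | h1
  · have h2 : p.2 ≠ k := by
      intro h
      exact hp (Prod.ext h1 h)
    rw [h1, Function.update_self, Function.update_of_ne h2]
  · rw [Function.update_of_ne h1]

lemma deriv_of_affine {f : ℝ → ℝ} {A B : ℝ} (h : ∀ t, f t = A * t + B) (x : ℝ) :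
    deriv f x = A := by
  have hf : f = fun t => A * t + B := funext h
  have h' : HasDerivAt (fun t : ℝ => A * t + B) A x := by
    simpa using ((hasDerivAt_id x).const_mul A).add_const B
  rw [hf]
  exact h'.deriv

section Derivs
variable {d : ℕ} (α a : Fin d → ℝ) (γ δ c e : Fin d → Fin d → ℝ) (lam : Fin d → ℝ)

lemma sum_update_mul (i : Fin d) :
    ∀ u : ℝ, (∑ j : Fin d, Function.update α i u j * a j)
      = u * a i + ∑ j ∈ Finset.univ.erase i, α j * a j := by
  intro u
  rw [← Finset.add_sum_erase _ _ (Finset.mem_univ i)]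
  congr 1
  · simp
  · exact Finset.sum_congr rfl fun j hj => by
      rw [Function.update_of_ne (Finset.ne_of_mem_erase hj)]

lemma sum_mul_update (i : Fin d) :
    ∀ u : ℝ, (∑ j : Fin d, α j * Function.update a i u j)
      = α i * u + ∑ j ∈ Finset.univ.erase i, α j * a j := by
  intro u
  rw [← Finset.add_sum_erase _ _ (Finset.mem_univ i)]
  congr 1
  · simp
  · exact Finset.sum_congr rfl fun j hj => by
      rw [Function.update_of_ne (Finset.ne_of_mem_erase hj)]

lemma deriv_qnn_α (i : Fin d) (x : ℝ) :
    deriv (fun t => qnnY d (Function.update α i t) a γ δ c e lam) x = a i := by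
  refine deriv_of_affine
    (B := qnnY d (Function.update α i 0) a γ δ c e lam) (fun t => ?_) x
  simp only [qnnY, sum_update_mul]
  ring

lemma deriv_qnn_a (i : Fin d) (x : ℝ) :
    deriv (fun t => qnnY d α (Function.update a i t) γ δ c e lam) x = α i := by
  refine deriv_of_affine
    (B := qnnY d α (Function.update a i 0) γ δ c e lam) (fun t => ?_) x
  simp only [qnnY, sum_mul_update]
  ring

lemma pair_sum_split (g : Fin d → Fin d → ℝ)
    (F : (Fin d → Fin d → ℝ) → Fin d × Fin d → ℝ)
    (i k : Fin d) (hik : i < k)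
    (hF : ∀ u p, p ≠ (i,k) → F (updEntry d g i k u) p = F g p) :
    ∀ u : ℝ, (∑ p ∈ Finset.univ.filter (fun p : Fin d × Fin d => p.1 < p.2),
        F (updEntry d g i k u) p)
      = F (updEntry d g i k u) (i,k)
        + ∑ p ∈ (Finset.univ.filter (fun p : Fin d × Fin d => p.1 < p.2)).erase (i,k),
            F g p := by
  intro u
  have hq : ((i,k) : Fin d × Fin d)
      ∈ Finset.univ.filter (fun p : Fin d × Fin d => p.1 < p.2) := by
    simp [hik]
  rw [← Finset.add_sum_erase _ _ hq]
  congr 1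
  exact Finset.sum_congr rfl fun p hp => hF u p (Finset.ne_of_mem_erase hp)

lemma deriv_qnn_γ (i k : Fin d) (hik : i < k) (x : ℝ) :
    deriv (fun t => qnnY d α a (updEntry d γ i k t) δ c e lam) x
      = 2 * (Real.cos (lam k - lam i) * c i k - Real.sin (lam k - lam i) * e i k) := by
  have e1 := pair_sum_split (d := d) γ
    (fun g p => Real.cos (lam p.2 - lam p.1)
        * (g p.1 p.2 * c p.1 p.2 - δ p.1 p.2 * e p.1 p.2)
      - Real.sin (lam p.2 - lam p.1)
        * (g p.1 p.2 * e p.1 p.2 + δ p.1 p.2 * c p.1 p.2))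
    i k hik (fun u p hp => by simp only [updEntry_ne d γ i k u p hp])
  refine deriv_of_affine
    (B := qnnY d α a (updEntry d γ i k 0) δ c e lam) (fun t => ?_) x
  simp only [qnnY, e1, updEntry_self]
  ring

lemma deriv_qnn_δ (i k : Fin d) (hik : i < k) (x : ℝ) :
    deriv (fun t => qnnY d α a γ (updEntry d δ i k t) c e lam) x
      = 2 * (-(Real.cos (lam k - lam i) * e i k) - Real.sin (lam k - lam i) * c i k) := by
  have e1 := pair_sum_split (d := d) δ
    (fun g p => Real.cos (lam p.2 - lam p.1)
        * (γ p.1 p.2 * c p.1 p.2 - g p.1 p.2 * e p.1 p.2)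
      - Real.sin (lam p.2 - lam p.1)
        * (γ p.1 p.2 * e p.1 p.2 + g p.1 p.2 * c p.1 p.2))
    i k hik (fun u p hp => by simp only [updEntry_ne d δ i k u p hp])
  refine deriv_of_affine
    (B := qnnY d α a γ (updEntry d δ i k 0) c e lam) (fun t => ?_) x
  simp only [qnnY, e1, updEntry_self]
  ring

lemma deriv_qnn_c (i k : Fin d) (hik : i < k) (x : ℝ) :
    deriv (fun t => qnnY d α a γ δ (updEntry d c i k t) e lam) x
      = 2 * (Real.cos (lam k - lam i) * γ i k - Real.sin (lam k - lam i) * δ i k) := by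
  have e1 := pair_sum_split (d := d) c
    (fun g p => Real.cos (lam p.2 - lam p.1)
        * (γ p.1 p.2 * g p.1 p.2 - δ p.1 p.2 * e p.1 p.2)
      - Real.sin (lam p.2 - lam p.1)
        * (γ p.1 p.2 * e p.1 p.2 + δ p.1 p.2 * g p.1 p.2))
    i k hik (fun u p hp => by simp only [updEntry_ne d c i k u p hp])
  refine deriv_of_affine
    (B := qnnY d α a γ δ (updEntry d c i k 0) e lam) (fun t => ?_) x
  simp only [qnnY, e1, updEntry_self]
  ring

lemma deriv_qnn_e (i k : Fin d) (hik : i < k) (x : ℝ) :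
    deriv (fun t => qnnY d α a γ δ c (updEntry d e i k t) lam) x
      = 2 * (-(Real.cos (lam k - lam i) * δ i k) - Real.sin (lam k - lam i) * γ i k) := by
  have e1 := pair_sum_split (d := d) e
    (fun g p => Real.cos (lam p.2 - lam p.1)
        * (γ p.1 p.2 * c p.1 p.2 - δ p.1 p.2 * g p.1 p.2)
      - Real.sin (lam p.2 - lam p.1)
        * (γ p.1 p.2 * g p.1 p.2 + δ p.1 p.2 * c p.1 p.2))
    i k hik (fun u p hp => by simp only [updEntry_ne d e i k u p hp])
  refine deriv_of_affine
    (B := qnnY d α a γ δ c (updEntry d e i k 0) lam) (fun t => ?_) x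
  simp only [qnnY, e1, updEntry_self]
  ring

end Derivs


/-- **Tangent kernel of the reparametrized quantum neural network.**
The sum over all parameters `θ ∈ {α_i, a_i, γ_{ik}, δ_{ik}, c_{ik}, e_{ik}}` of
`(∂Y/∂θ)(λ)·(∂Y/∂θ)(λ′)` equals
`Σ_i (a_i² + α_i²) + 4 Σ_{i<k} (γ_{ik}² + δ_{ik}² + c_{ik}² + e_{ik}²)
  cos((λ_k − λ_i) − (λ′_k − λ′_i))`. -/
theorem qnn_tangent_kernel (d : ℕ) (hd : 1 ≤ d)
    (α a : Fin d → ℝ) (γ δ c e : Fin d → Fin d → ℝ) (lam lam' : Fin d → ℝ) :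
    (∑ i : Fin d,
        deriv (fun t => qnnY d (Function.update α i t) a γ δ c e lam) (α i)
          * deriv (fun t => qnnY d (Function.update α i t) a γ δ c e lam') (α i))
    + (∑ i : Fin d,
        deriv (fun t => qnnY d α (Function.update a i t) γ δ c e lam) (a i)
          * deriv (fun t => qnnY d α (Function.update a i t) γ δ c e lam') (a i))
    + (∑ p ∈ Finset.univ.filter (fun p : Fin d × Fin d => p.1 < p.2),
        deriv (fun t => qnnY d α a (updEntry d γ p.1 p.2 t) δ c e lam) (γ p.1 p.2)
          * deriv (fun t => qnnY d α a (updEntry d γ p.1 p.2 t) δ c e lam') (γ p.1 p.2))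
    + (∑ p ∈ Finset.univ.filter (fun p : Fin d × Fin d => p.1 < p.2),
        deriv (fun t => qnnY d α a γ (updEntry d δ p.1 p.2 t) c e lam) (δ p.1 p.2)
          * deriv (fun t => qnnY d α a γ (updEntry d δ p.1 p.2 t) c e lam') (δ p.1 p.2))
    + (∑ p ∈ Finset.univ.filter (fun p : Fin d × Fin d => p.1 < p.2),
        deriv (fun t => qnnY d α a γ δ (updEntry d c p.1 p.2 t) e lam) (c p.1 p.2)
          * deriv (fun t => qnnY d α a γ δ (updEntry d c p.1 p.2 t) e lam') (c p.1 p.2))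
    + (∑ p ∈ Finset.univ.filter (fun p : Fin d × Fin d => p.1 < p.2),
        deriv (fun t => qnnY d α a γ δ c (updEntry d e p.1 p.2 t) lam) (e p.1 p.2)
          * deriv (fun t => qnnY d α a γ δ c (updEntry d e p.1 p.2 t) lam') (e p.1 p.2))
    = (∑ i : Fin d, (a i ^ 2 + α i ^ 2))
      + 4 * ∑ p ∈ Finset.univ.filter (fun p : Fin d × Fin d => p.1 < p.2),
          (γ p.1 p.2 ^ 2 + δ p.1 p.2 ^ 2 + c p.1 p.2 ^ 2 + e p.1 p.2 ^ 2)
            * Real.cos ((lam p.2 - lam p.1) - (lam' p.2 - lam' p.1)) := by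
  have h1 : (∑ i : Fin d,
        deriv (fun t => qnnY d (Function.update α i t) a γ δ c e lam) (α i)
          * deriv (fun t => qnnY d (Function.update α i t) a γ δ c e lam') (α i))
      = ∑ i : Fin d, a i * a i :=
    Finset.sum_congr rfl fun i _ => by rw [deriv_qnn_α, deriv_qnn_α]
  have h2 : (∑ i : Fin d,
        deriv (fun t => qnnY d α (Function.update a i t) γ δ c e lam) (a i)
          * deriv (fun t => qnnY d α (Function.update a i t) γ δ c e lam') (a i))
      = ∑ i : Fin d, α i * α i :=
    Finset.sum_congr rfl fun i _ => by rw [deriv_qnn_a, deriv_qnn_a]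
  have h3 : (∑ p ∈ Finset.univ.filter (fun p : Fin d × Fin d => p.1 < p.2),
        deriv (fun t => qnnY d α a (updEntry d γ p.1 p.2 t) δ c e lam) (γ p.1 p.2)
          * deriv (fun t => qnnY d α a (updEntry d γ p.1 p.2 t) δ c e lam') (γ p.1 p.2))
      = ∑ p ∈ Finset.univ.filter (fun p : Fin d × Fin d => p.1 < p.2),
          (2 * (Real.cos (lam p.2 - lam p.1) * c p.1 p.2
              - Real.sin (lam p.2 - lam p.1) * e p.1 p.2))
          * (2 * (Real.cos (lam' p.2 - lam' p.1) * c p.1 p.2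
              - Real.sin (lam' p.2 - lam' p.1) * e p.1 p.2)) :=
    Finset.sum_congr rfl fun p hp => by
      rw [deriv_qnn_γ _ _ _ _ _ _ _ _ _ (Finset.mem_filter.mp hp).2,
        deriv_qnn_γ _ _ _ _ _ _ _ _ _ (Finset.mem_filter.mp hp).2]
  have h4 : (∑ p ∈ Finset.univ.filter (fun p : Fin d × Fin d => p.1 < p.2),
        deriv (fun t => qnnY d α a γ (updEntry d δ p.1 p.2 t) c e lam) (δ p.1 p.2)
          * deriv (fun t => qnnY d α a γ (updEntry d δ p.1 p.2 t) c e lam') (δ p.1 p.2))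
      = ∑ p ∈ Finset.univ.filter (fun p : Fin d × Fin d => p.1 < p.2),
          (2 * (-(Real.cos (lam p.2 - lam p.1) * e p.1 p.2)
              - Real.sin (lam p.2 - lam p.1) * c p.1 p.2))
          * (2 * (-(Real.cos (lam' p.2 - lam' p.1) * e p.1 p.2)
              - Real.sin (lam' p.2 - lam' p.1) * c p.1 p.2)) :=
    Finset.sum_congr rfl fun p hp => by
      rw [deriv_qnn_δ _ _ _ _ _ _ _ _ _ (Finset.mem_filter.mp hp).2,
        deriv_qnn_δ _ _ _ _ _ _ _ _ _ (Finset.mem_filter.mp hp).2]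
  have h5 : (∑ p ∈ Finset.univ.filter (fun p : Fin d × Fin d => p.1 < p.2),
        deriv (fun t => qnnY d α a γ δ (updEntry d c p.1 p.2 t) e lam) (c p.1 p.2)
          * deriv (fun t => qnnY d α a γ δ (updEntry d c p.1 p.2 t) e lam') (c p.1 p.2))
      = ∑ p ∈ Finset.univ.filter (fun p : Fin d × Fin d => p.1 < p.2),
          (2 * (Real.cos (lam p.2 - lam p.1) * γ p.1 p.2
              - Real.sin (lam p.2 - lam p.1) * δ p.1 p.2))
          * (2 * (Real.cos (lam' p.2 - lam' p.1) * γ p.1 p.2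
              - Real.sin (lam' p.2 - lam' p.1) * δ p.1 p.2)) :=
    Finset.sum_congr rfl fun p hp => by
      rw [deriv_qnn_c _ _ _ _ _ _ _ _ _ (Finset.mem_filter.mp hp).2,
        deriv_qnn_c _ _ _ _ _ _ _ _ _ (Finset.mem_filter.mp hp).2]
  have h6 : (∑ p ∈ Finset.univ.filter (fun p : Fin d × Fin d => p.1 < p.2),
        deriv (fun t => qnnY d α a γ δ c (updEntry d e p.1 p.2 t) lam) (e p.1 p.2)
          * deriv (fun t => qnnY d α a γ δ c (updEntry d e p.1 p.2 t) lam') (e p.1 p.2))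
      = ∑ p ∈ Finset.univ.filter (fun p : Fin d × Fin d => p.1 < p.2),
          (2 * (-(Real.cos (lam p.2 - lam p.1) * δ p.1 p.2)
              - Real.sin (lam p.2 - lam p.1) * γ p.1 p.2))
          * (2 * (-(Real.cos (lam' p.2 - lam' p.1) * δ p.1 p.2)
              - Real.sin (lam' p.2 - lam' p.1) * γ p.1 p.2)) :=
    Finset.sum_congr rfl fun p hp => by
      rw [deriv_qnn_e _ _ _ _ _ _ _ _ _ (Finset.mem_filter.mp hp).2,
        deriv_qnn_e _ _ _ _ _ _ _ _ _ (Finset.mem_filter.mp hp).2]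
  rw [h1, h2, h3, h4, h5, h6, Finset.mul_sum]
  have hsum1 : (∑ i : Fin d, a i * a i) + ∑ i : Fin d, α i * α i
      = ∑ i : Fin d, (a i ^ 2 + α i ^ 2) := by
    rw [← Finset.sum_add_distrib]
    exact Finset.sum_congr rfl fun i _ => by ring
  have hpair :
      (∑ p ∈ Finset.univ.filter (fun p : Fin d × Fin d => p.1 < p.2),
          (2 * (Real.cos (lam p.2 - lam p.1) * c p.1 p.2
              - Real.sin (lam p.2 - lam p.1) * e p.1 p.2))
          * (2 * (Real.cos (lam' p.2 - lam' p.1) * c p.1 p.2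
              - Real.sin (lam' p.2 - lam' p.1) * e p.1 p.2)))
      + (∑ p ∈ Finset.univ.filter (fun p : Fin d × Fin d => p.1 < p.2),
          (2 * (-(Real.cos (lam p.2 - lam p.1) * e p.1 p.2)
              - Real.sin (lam p.2 - lam p.1) * c p.1 p.2))
          * (2 * (-(Real.cos (lam' p.2 - lam' p.1) * e p.1 p.2)
              - Real.sin (lam' p.2 - lam' p.1) * c p.1 p.2)))
      + (∑ p ∈ Finset.univ.filter (fun p : Fin d × Fin d => p.1 < p.2),
          (2 * (Real.cos (lam p.2 - lam p.1) * γ p.1 p.2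
              - Real.sin (lam p.2 - lam p.1) * δ p.1 p.2))
          * (2 * (Real.cos (lam' p.2 - lam' p.1) * γ p.1 p.2
              - Real.sin (lam' p.2 - lam' p.1) * δ p.1 p.2)))
      + (∑ p ∈ Finset.univ.filter (fun p : Fin d × Fin d => p.1 < p.2),
          (2 * (-(Real.cos (lam p.2 - lam p.1) * δ p.1 p.2)
              - Real.sin (lam p.2 - lam p.1) * γ p.1 p.2))
          * (2 * (-(Real.cos (lam' p.2 - lam' p.1) * δ p.1 p.2)
              - Real.sin (lam' p.2 - lam' p.1) * γ p.1 p.2)))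
      = ∑ p ∈ Finset.univ.filter (fun p : Fin d × Fin d => p.1 < p.2),
          4 * ((γ p.1 p.2 ^ 2 + δ p.1 p.2 ^ 2 + c p.1 p.2 ^ 2 + e p.1 p.2 ^ 2)
            * Real.cos ((lam p.2 - lam p.1) - (lam' p.2 - lam' p.1))) := by
    rw [← Finset.sum_add_distrib, ← Finset.sum_add_distrib, ← Finset.sum_add_distrib]
    exact Finset.sum_congr rfl fun p _ => by rw [Real.cos_sub (lam p.2 - lam p.1) (lam' p.2 - lam' p.1)]; ring
  linarith [hsum1, hpair]
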